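/- Let A be an algebra with a Mal'cev polynomial such that every three-element subset of A^4 is an algebraic set with respect to the clone of polynomial operations of A. Then for all congruences α, β of A strictly above equality, the commutator [α, β] is strictly above equality. -/

import Mathlib

/-- A clone on a set `A`: a family of finitary operations containing all
projections and closed under composition. -/
structure Clone (A : Type) where
  ops : ∀ n : ℕ, Set ((Fin n → A) → A)
  proj_mem : ∀ (n : ℕ) (i : Fin n), (fun x => x i) ∈ ops n
  comp_mem : ∀ (m n : ℕ) (f : (Fin n → A) → A) (g : Fin n → (Fin m → A) → A),
      f ∈ ops n → (∀ i, g i ∈ ops m) → (fun x => f (fun i => g i x)) ∈ ops m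

/-- `X ⊆ A^n` is algebraic w.r.t. a family of operations `F`: it is the solution
set of some system of equations between `n`-ary members of `F`. -/
def IsAlgSet {A : Type} (F : ∀ n : ℕ, Set ((Fin n → A) → A)) (n : ℕ)
    (X : Set (Fin n → A)) : Prop :=
  ∃ (I : Type) (p q : I → (Fin n → A) → A),
    (∀ i, p i ∈ F n) ∧ (∀ i, q i ∈ F n) ∧ X = {x | ∀ i, p i x = q i x}

/-- Equational additivity: unions of algebraic sets of the same arity are algebraic. -/
def EqAdditive {A : Type} (F : ∀ n : ℕ, Set ((Fin n → A) → A)) : Prop :=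
  ∀ (n : ℕ) (X Y : Set (Fin n → A)),
    IsAlgSet F n X → IsAlgSet F n Y → IsAlgSet F n (X ∪ Y)

/-- The quaternary relation `Δ_A`. -/
def Delta (A : Type) : Set (Fin 4 → A) := {x | x 0 = x 1 ∨ x 2 = x 3}
/-- Polynomial operations over a clone: generated by the clone, the constants
and the projections, closed under composition. -/
inductive PolyOp {A : Type} (C : Clone A) : ∀ n : ℕ, ((Fin n → A) → A) → Prop
  | base {n : ℕ} {f : (Fin n → A) → A} : f ∈ C.ops n → PolyOp C n f
  | const {n : ℕ} (a : A) : PolyOp C n (fun _ => a)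
  | proj {n : ℕ} (i : Fin n) : PolyOp C n (fun x => x i)
  | comp {m n : ℕ} {f : (Fin n → A) → A} {g : Fin n → (Fin m → A) → A} :
      PolyOp C n f → (∀ i, PolyOp C m (g i)) → PolyOp C m (fun x => f (fun i => g i x))

/-- The clone of polynomial operations of the algebra `(A; C)`. -/
def PolClone {A : Type} (C : Clone A) : Clone A where
  ops n := {f | PolyOp C n f}
  proj_mem n i := PolyOp.proj i
  comp_mem _ _ _ _ hf hg := PolyOp.comp hf hg

/-- A congruence of the algebra `(A; C)`: an equivalence relation compatible
with all operations of the clone. -/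
def IsCong {A : Type} (C : Clone A) (θ : A → A → Prop) : Prop :=
  Equivalence θ ∧ ∀ (n : ℕ) (f : (Fin n → A) → A), f ∈ C.ops n →
    ∀ x y : Fin n → A, (∀ i, θ (x i) (y i)) → θ (f x) (f y)

/-- `d` is a Mal'cev operation. -/
def IsMalcev {A : Type} (d : A → A → A → A) : Prop :=
  ∀ a b : A, d a b b = a ∧ d b b a = a

/-- The algebra `(A; C)` has a Mal'cev polynomial. -/
def HasMalcevPoly {A : Type} (C : Clone A) : Prop :=
  ∃ d : A → A → A → A,
    (fun x : Fin 3 → A => d (x 0) (x 1) (x 2)) ∈ (PolClone C).ops 3 ∧ IsMalcev d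

/-- `α` centralizes `β` modulo `η` (the term condition). -/
def Centralizes {A : Type} (C : Clone A) (α β η : A → A → Prop) : Prop :=
  ∀ (m k : ℕ) (p : (Fin (m + k) → A) → A), p ∈ (PolClone C).ops (m + k) →
    ∀ (a b : Fin m → A) (u v : Fin k → A),
      (∀ i, α (a i) (b i)) → (∀ i, β (u i) (v i)) →
      η (p (Fin.append a u)) (p (Fin.append a v)) →
      η (p (Fin.append b u)) (p (Fin.append b v))

/-- The term condition commutator `[α, β]`: the least congruence `η` such that
`α` centralizes `β` modulo `η` (realized as the intersection of all such). -/
def CommRel {A : Type} (C : Clone A) (α β : A → A → Prop) (x y : A) : Prop :=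
  ∀ η : A → A → Prop, IsCong C η → Centralizes C α β η → η x y

/-- The congruence of `(A; C)` generated by a binary relation `r`. -/
def CongGen {A : Type} (C : Clone A) (r : A → A → Prop) (x y : A) : Prop :=
  ∀ θ : A → A → Prop, IsCong C θ → (∀ a b, r a b → θ a b) → θ x y

/-!
Suppose `[α, β]` is the equality relation, and pick `a ≠ b` with `α a b` and `u ≠ v` with
`β u v`. Then `α` centralizes `β` modulo equality, and with a Mal'cev polynomial `d` the term
condition upgrades to the two-term condition: the auxiliary polynomial
`d (d (P(x,y)) (P(x,u)) (Q(x,u))) (Q(x,y)) (Q(b,v))` turns three of the equations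
`P(x,y) = Q(x,y)`, `x ∈ {a,b}`, `y ∈ {u,v}`, into the fourth. Every algebraic set containing
`(a,u,a,u)`, `(a,v,a,v)` and `(b,u,b,u)` therefore contains `(b,v,b,v)`, so the three-element set
of the first three tuples is not algebraic.
-/

def TwoTermCondition {A : Type} (C : Clone A) (α β : A → A → Prop) : Prop :=
  ∀ (m k : ℕ) (P Q : (Fin (m + k) → A) → A),
    P ∈ (PolClone C).ops (m + k) → Q ∈ (PolClone C).ops (m + k) →
    ∀ (a b : Fin m → A) (u v : Fin k → A),
      (∀ i, α (a i) (b i)) → (∀ i, β (u i) (v i)) →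
      P (Fin.append a u) = Q (Fin.append a u) → P (Fin.append a v) = Q (Fin.append a v) →
      P (Fin.append b u) = Q (Fin.append b u) → P (Fin.append b v) = Q (Fin.append b v)

namespace PolyOp

variable {A : Type} {C : Clone A}

theorem comp_map {m n : ℕ} {f : (Fin n → A) → A} {F : (Fin m → A) → Fin n → A}
    (hf : PolyOp C n f) (hF : ∀ i, PolyOp C m fun x => F x i) :
    PolyOp C m fun x => f (F x) :=
  comp hf hF

theorem comp_ternary {m : ℕ} {d : A → A → A → A}
    (hd : PolyOp C 3 fun x => d (x 0) (x 1) (x 2)) {f g h : (Fin m → A) → A}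
    (hf : PolyOp C m f) (hg : PolyOp C m g) (hh : PolyOp C m h) :
    PolyOp C m fun x => d (f x) (g x) (h x) :=
  comp_map (F := fun x => ![f x, g x, h x]) hd fun i => by fin_cases i <;> assumption

theorem append_const {m k : ℕ} (u : Fin k → A) (i : Fin (m + k)) :
    PolyOp C (m + k) fun z => Fin.append (fun j => z (Fin.castAdd k j)) u i := by
  refine Fin.addCases (fun j => ?_) (fun j => ?_) i
  · simpa only [Fin.append_left] using proj (Fin.castAdd k j)
  · simpa only [Fin.append_right] using const (u j)

end PolyOp

section TwoTerm

variable {A : Type} {C : Clone A} {α β : A → A → Prop}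

theorem centralizes_eq_of_commRel_eq (h : ∀ x y, CommRel C α β x y → x = y) :
    Centralizes C α β (· = ·) :=
  fun m k p hp a b u v hab huv hau => h _ _ fun _ hη hcent =>
    hcent m k p hp a b u v hab huv (hau ▸ hη.1.refl _)

theorem Centralizes.twoTermCondition (hM : HasMalcevPoly C)
    (h : Centralizes C α β (· = ·)) : TwoTermCondition C α β := by
  obtain ⟨d, hd, hdM⟩ := hM
  have dxyy : ∀ x y, d x y y = x := fun x y => (hdM x y).1
  have dxxy : ∀ x y, d x x y = y := fun x y => (hdM y x).2
  intro m k P Q hP hQ a b u v hab huv hau hav hbu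
  have left_append : ∀ (x : Fin m → A) (y : Fin k → A),
      (fun j => Fin.append x y (Fin.castAdd k j)) = x :=
    fun x y => funext (Fin.append_left x y)
  let K : (Fin (m + k) → A) → A := fun z =>
    d (d (P z) (P (Fin.append (fun j => z (Fin.castAdd k j)) u))
        (Q (Fin.append (fun j => z (Fin.castAdd k j)) u)))
      (Q z) (Q (Fin.append b v))
  have hK : PolyOp C (m + k) K :=
    .comp_ternary hd (.comp_ternary hd hP (.comp_map hP (.append_const u))
      (.comp_map hQ (.append_const u))) hQ (.const _)
  have hKa : K (Fin.append a u) = K (Fin.append a v) := by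
    simp only [K, left_append, hau, hav, dxyy, dxxy]
  have hKb := h m k K hK a b u v hab huv hKa
  simpa only [K, left_append, hbu, dxyy, dxxy] using hKb.symm

theorem TwoTermCondition.mem_of_isAlgSet (h : TwoTermCondition C α β) {n m k : ℕ}
    {X : Set (Fin n → A)} (hX : IsAlgSet (PolClone C).ops n X)
    {F : (Fin (m + k) → A) → Fin n → A} (hF : ∀ i, PolyOp C (m + k) fun z => F z i)
    {a b : Fin m → A} {u v : Fin k → A}
    (hab : ∀ i, α (a i) (b i)) (huv : ∀ i, β (u i) (v i))
    (hau : F (Fin.append a u) ∈ X) (hav : F (Fin.append a v) ∈ X)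
    (hbu : F (Fin.append b u) ∈ X) : F (Fin.append b v) ∈ X := by
  obtain ⟨I, p, q, hp, hq, rfl⟩ := hX
  exact fun i => h m k _ _ ((hp i).comp_map hF) ((hq i).comp_map hF) a b u v hab huv
    (hau i) (hav i) (hbu i)

end TwoTerm

/-- If an algebra has a Mal'cev polynomial and every three-element subset of
`A^4` is algebraic with respect to the polynomial clone, then `[α, β]` is
strictly above equality for all congruences `α, β` strictly above equality. -/
theorem stmt17 {A : Type} (C : Clone A) (hM : HasMalcevPoly C)
    (h3 : ∀ X : Set (Fin 4 → A), X.ncard = 3 → IsAlgSet (PolClone C).ops 4 X) :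
    ∀ α β : A → A → Prop, IsCong C α → IsCong C β →
      (∃ a b : A, a ≠ b ∧ α a b) → (∃ a b : A, a ≠ b ∧ β a b) →
      ∃ a b : A, a ≠ b ∧ CommRel C α β a b := by
  rintro α β - - ⟨a, b, hab, hαab⟩ ⟨u, v, huv, hβuv⟩
  by_contra! hcomm
  have hTwoTerm : TwoTermCondition C α β :=
    (centralizes_eq_of_commRel_eq fun x y hxy =>
      by_contra fun hne => hcomm x y hne hxy).twoTermCondition hM
  let F : (Fin (1 + 1) → A) → Fin 4 → A := fun z => ![z 0, z 1, z 0, z 1]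
  have hF : ∀ i, PolyOp C (1 + 1) fun z => F z i := fun i => by
    fin_cases i <;> exact .proj _
  have hFval : ∀ x y : A, F (Fin.append ![x] ![y]) = ![x, y, x, y] := fun x y => by
    funext i; fin_cases i <;> rfl
  have hX : ({![a, u, a, u], ![a, v, a, v], ![b, u, b, u]} : Set (Fin 4 → A)).ncard = 3 :=
    Set.ncard_eq_three.2 ⟨_, _, _, fun h => huv (congrFun h 1), fun h => hab (congrFun h 0),
      fun h => hab (congrFun h 0), rfl⟩
  have hbv := hTwoTerm.mem_of_isAlgSet (h3 _ hX) hF (a := ![a]) (b := ![b]) (u := ![u]) (v := ![v])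
    (Fin.forall_fin_one.2 hαab) (Fin.forall_fin_one.2 hβuv) (by rw [hFval]; exact .inl rfl)
    (by rw [hFval]; exact .inr (.inl rfl)) (by rw [hFval]; exact .inr (.inr rfl))
  rw [hFval] at hbv
  rcases hbv with h | h | h
  · exact hab (congrFun h 0).symm
  · exact hab (congrFun h 0).symm
  · exact huv (congrFun h 1).symm
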